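/- arXiv:0708.0245 — 2 statements merged into one kernel-verified Lean document; each statement's English description precedes it below -/
import Mathlib

section
/- Let Λ be a row-finite, locally convex k-graph. Suppose p ∈ ℕ^k and (x_n)_{n ∈ ℕ^k} is a family of boundary paths of Λ such that p ∧ d(x_n) = 0 for every n ∈ ℕ^k, and such that (x_a;(p, p+a)) ≈ (x_b;(p, p+a)) whenever a ≤ b in ℕ^k. Then there exists a unique boundary path x ∈ Λ^{≤∞} such that p ∧ d(x) = 0 and (x;(p, p+n)) ≈ (x_n;(p, p+n)) for all n ∈ ℕ^k. (This is the combinatorial content of the paper's Proposition that every infinite path y of the desourcification of Λ is of the form [π(y);(p_y,∞)] for a unique boundary path π(y) of Λ and a unique p_y ∈ ℕ^k with p_y ∧ d(π(y)) = 0.) -/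
open scoped ENat

/-- `q ≤ m` coordinatewise, where `q ∈ ℕ^k` and `m ∈ (ℕ ∪ {∞})^k`. -/
def leDeg (k : ℕ) (q : Fin k → ℕ) (m : Fin k → ℕ∞) : Prop :=
  ∀ i, (q i : ℕ∞) ≤ m i

/-- The coordinatewise minimum `m ∧ d` of `m ∈ ℕ^k` and `d ∈ (ℕ ∪ {∞})^k`,
viewed as an element of `ℕ^k`. -/
noncomputable def wedge {k : ℕ} (m : Fin k → ℕ) (dx : Fin k → ℕ∞) : Fin k → ℕ :=
  fun i => ((m i : ℕ∞) ⊓ dx i).toNat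

lemma wedge_coe {k : ℕ} (m : Fin k → ℕ) (dx : Fin k → ℕ∞) (i : Fin k) :
    ((wedge m dx i : ℕ)  : ℕ∞) = (m i : ℕ∞) ⊓ dx i := by
  have h : (m i : ℕ∞) ⊓ dx i ≠ ⊤ :=
    (inf_le_left.trans_lt (ENat.coe_lt_top (m i))).ne
  simpa [wedge] using ENat.coe_toNat h

lemma wedge_leDeg {k : ℕ} (m : Fin k → ℕ) (dx : Fin k → ℕ∞) :
    leDeg k (wedge m dx) dx := by
  intro i
  rw [wedge_coe]
  exact inf_le_right

/-- The data of a countable-free small category with a degree map: the underlying data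
of a `k`-graph. -/
structure KGraphData (k : ℕ) where
  Obj : Type
  Mor : Type
  r : Mor → Obj
  s : Mor → Obj
  idm : Obj → Mor
  comp : Mor → Mor → Mor
  d : Mor → Fin k → ℕ

/-- The axioms making `Λ` a `k`-graph: a small category together with a degree functor
`d : Λ → ℕ^k` satisfying the factorisation property. (Composition `comp f g` is only
constrained when `s f = r g`.) -/
structure IsKGraph {k : ℕ} (Λ : KGraphData k) : Prop where
  r_id : ∀ v, Λ.r (Λ.idm v) = v
  s_id : ∀ v, Λ.s (Λ.idm v) = v
  id_comp : ∀ f, Λ.comp (Λ.idm (Λ.r f)) f = f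
  comp_id : ∀ f, Λ.comp f (Λ.idm (Λ.s f)) = f
  r_comp : ∀ f g, Λ.s f = Λ.r g → Λ.r (Λ.comp f g) = Λ.r f
  s_comp : ∀ f g, Λ.s f = Λ.r g → Λ.s (Λ.comp f g) = Λ.s g
  assoc : ∀ f g h, Λ.s f = Λ.r g → Λ.s g = Λ.r h →
    Λ.comp (Λ.comp f g) h = Λ.comp f (Λ.comp g h)
  d_id : ∀ v, Λ.d (Λ.idm v) = 0
  d_comp : ∀ f g, Λ.s f = Λ.r g → Λ.d (Λ.comp f g) = Λ.d f + Λ.d g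
  factor : ∀ (f : Λ.Mor) (m n : Fin k → ℕ), Λ.d f = m + n →
    ∃! p : Λ.Mor × Λ.Mor, Λ.s p.1 = Λ.r p.2 ∧ Λ.d p.1 = m ∧ Λ.d p.2 = n ∧
      Λ.comp p.1 p.2 = f

/-- `Λ` is row-finite: `vΛ^n` is finite for every vertex `v` and degree `n`. -/
def RowFinite {k : ℕ} (Λ : KGraphData k) : Prop :=
  ∀ (v : Λ.Obj) (n : Fin k → ℕ), {f : Λ.Mor | Λ.r f = v ∧ Λ.d f = n}.Finite

/-- `Λ` is locally convex. -/
def LocallyConvex {k : ℕ} (Λ : KGraphData k) : Prop :=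
  ∀ (i j : Fin k), i ≠ j → ∀ lam mu : Λ.Mor,
    Λ.d lam = Pi.single i 1 → Λ.d mu = Pi.single j 1 → Λ.r lam = Λ.r mu →
    (∃ f, Λ.r f = Λ.s lam ∧ Λ.d f = Pi.single j 1) ∧
    (∃ g, Λ.r g = Λ.s mu ∧ Λ.d g = Pi.single i 1)

/-- A boundary path of `Λ`: a degree-preserving functor `x : Ω_{k,m} → Λ`
(encoded by its vertex map `vert` and segment map `seg`, constrained on
pairs `p ≤ q ≤ m = deg`) such that whenever `p ≤ m` and `p i = m i`,
`x(p)Λ^{e_i} = ∅`. -/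
structure BPath (k : ℕ) (Λ : KGraphData k) where
  deg : Fin k → ℕ∞
  vert : (Fin k → ℕ) → Λ.Obj
  seg : (Fin k → ℕ) → (Fin k → ℕ) → Λ.Mor
  seg_r : ∀ p q, p ≤ q → leDeg k q deg → Λ.r (seg p q) = vert p
  seg_s : ∀ p q, p ≤ q → leDeg k q deg → Λ.s (seg p q) = vert q
  seg_deg : ∀ p q, p ≤ q → leDeg k q deg → Λ.d (seg p q) = q - p
  seg_id : ∀ p, leDeg k p deg → seg p p = Λ.idm (vert p)
  seg_comp : ∀ p q t, p ≤ q → q ≤ t → leDeg k t deg →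
    Λ.comp (seg p q) (seg q t) = seg p t
  boundary : ∀ (p : Fin k → ℕ) (i : Fin k), leDeg k p deg → (p i : ℕ∞) = deg i →
    ∀ e : Λ.Mor, Λ.r e = vert p → Λ.d e ≠ Pi.single i 1

/-- Equality of boundary paths as functors: same degree and the same segments on
the common (valid) domain. -/
def BPath.eqv {k : ℕ} {Λ : KGraphData k} (x y : BPath k Λ) : Prop :=
  x.deg = y.deg ∧ ∀ p q, p ≤ q → leDeg k q x.deg → x.seg p q = y.seg p q

lemma leDeg_add {k : ℕ} {n q : Fin k → ℕ} {D : Fin k → ℕ∞}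
    (hn : leDeg k n D) (hq : leDeg k q (fun i => D i - (n i : ℕ∞))) :
    leDeg k (q + n) D := by
  intro i
  have hqi := hq i
  have hni := hn i
  by_cases hD : D i = ⊤
  · rw [hD]; exact le_top
  · lift D i to ℕ using hD with a ha
    rw [show ((a : ℕ∞) - (n i : ℕ∞)) = ((a - n i : ℕ) : ℕ∞) by
      exact_mod_cast (ENat.coe_sub a (n i)).symm] at hqi
    have h1 : q i ≤ a - n i := by exact_mod_cast hqi
    have h2 : n i ≤ a := by exact_mod_cast hni
    have h3 : q i + n i ≤ a := by omega
    show ((q i + n i : ℕ) : ℕ∞) ≤ (a : ℕ∞)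
    exact_mod_cast h3

/-- The shift `σ^n(x)` of a boundary path `x` by `n ≤ d(x)`. -/
def BPath.shift {k : ℕ} {Λ : KGraphData k} (x : BPath k Λ) (n : Fin k → ℕ)
    (h : leDeg k n x.deg) : BPath k Λ where
  deg := fun i => x.deg i - (n i : ℕ∞)
  vert := fun p => x.vert (p + n)
  seg := fun p q => x.seg (p + n) (q + n)
  seg_r := fun p q hpq hq =>
    x.seg_r (p + n) (q + n) (add_le_add_left hpq n) (leDeg_add h hq)
  seg_s := fun p q hpq hq =>
    x.seg_s (p + n) (q + n) (add_le_add_left hpq n) (leDeg_add h hq)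
  seg_deg := by
    intro p q hpq hq
    rw [x.seg_deg (p + n) (q + n) (add_le_add_left hpq n) (leDeg_add h hq)]
    funext i
    simp only [Pi.sub_apply, Pi.add_apply]
    omega
  seg_id := by
    intro p hp
    show x.seg (p + n) (p + n) = _
    rw [x.seg_id (p + n) (leDeg_add h hp)]
  seg_comp := fun p q t hpq hqt ht =>
    x.seg_comp (p + n) (q + n) (t + n) (add_le_add_left hpq n)
      (add_le_add_left hqt n) (leDeg_add h ht)
  boundary := by
    intro p i hp hpi e he
    refine x.boundary (p + n) i (leDeg_add h hp) ?_ e he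
    have hni := h i
    have hpi' : (p i : ℕ∞) = x.deg i - (n i : ℕ∞) := hpi
    clear hpi
    by_cases hD : x.deg i = ⊤
    · rw [hD] at hpi'
      simp at hpi'
    · lift x.deg i to ℕ using hD with a ha
      rw [show ((a : ℕ∞) - (n i : ℕ∞)) = ((a - n i : ℕ) : ℕ∞) by
        exact_mod_cast (ENat.coe_sub a (n i)).symm] at hpi'
      have h1 : p i = a - n i := by exact_mod_cast hpi'
      have h2 : n i ≤ a := by exact_mod_cast hni
      have h3 : p i + n i = a := by omega
      show ((p i + n i : ℕ) : ℕ∞) = (a : ℕ∞)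
      exact_mod_cast h3

/-- The relation `∼` on `V_Λ = Λ^{≤∞} × ℕ^k`. -/
def VRel {k : ℕ} {Λ : KGraphData k} (a b : BPath k Λ × (Fin k → ℕ)) : Prop :=
  a.1.vert (wedge a.2 a.1.deg) = b.1.vert (wedge b.2 b.1.deg) ∧
  a.2 - wedge a.2 a.1.deg = b.2 - wedge b.2 b.1.deg

/-- The relation `≈` on `P_Λ = {(x;(m,n)) : x ∈ Λ^{≤∞}, m ≤ n}`
(as a relation on all triples). -/
def PRel {k : ℕ} {Λ : KGraphData k}
    (a b : BPath k Λ × (Fin k → ℕ) × (Fin k → ℕ)) : Prop :=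
  a.1.seg (wedge a.2.1 a.1.deg) (wedge a.2.2 a.1.deg) =
    b.1.seg (wedge b.2.1 b.1.deg) (wedge b.2.2 b.1.deg) ∧
  a.2.1 - wedge a.2.1 a.1.deg = b.2.1 - wedge b.2.1 b.1.deg ∧
  a.2.2 - a.2.1 = b.2.2 - b.2.1

/-- `z` is the concatenation `λ x` of the morphism `lam` with the boundary path `x`:
`z` has degree `d(lam) + d(x)`, `z(0, d lam) = lam`, and
`z(d lam, d lam + p) = x(0, p)` for all `p ≤ d(x)`. -/
def IsConcat {k : ℕ} (Λ : KGraphData k) (lam : Λ.Mor) (x z : BPath k Λ) : Prop :=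
  z.deg = (fun i => (Λ.d lam i : ℕ∞) + x.deg i) ∧
  z.seg 0 (Λ.d lam) = lam ∧
  ∀ p, leDeg k p x.deg → z.seg (Λ.d lam) (Λ.d lam + p) = x.seg 0 p

/-- `Λ` has local periodicity `m, n` at the vertex `v`: for every boundary path
`x ∈ vΛ^{≤∞}`, `m − m∧d(x) = n − n∧d(x)` and `σ^{m∧d(x)}(x) = σ^{n∧d(x)}(x)`. -/
def LocalPeriodicity {k : ℕ} (Λ : KGraphData k) (m n : Fin k → ℕ) (v : Λ.Obj) : Prop :=
  ∀ x : BPath k Λ, x.vert 0 = v →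
    (m - wedge m x.deg = n - wedge n x.deg) ∧
    BPath.eqv (x.shift (wedge m x.deg) (wedge_leDeg m x.deg))
      (x.shift (wedge n x.deg) (wedge_leDeg n x.deg))

/-!
Write `f n := (p + n) ∧ d(x_n)`. Comparing degrees in `(x_a;(p,p+a)) ≈ (x_b;(p,p+a))` gives
`(p + a) ∧ d(x_b) = f a` for `a ≤ b`, and the segments `x_a(0, f a)` and `x_b(0, f a)` coincide,
so all `x_n` agree wherever two of them are both defined. The limit has degree
`D := sup_n f n`, for which `(p + n) ∧ D = f n`; in particular every `q ≤ D` lies below `f q`,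
so `x(p', q') := x_{q'}(p', q')` is a boundary path: a coordinate `i` with `q i = D i` is a
boundary coordinate of `x_{q+1}`, since there `f` stays strictly below `p + q + 1`. Conversely a
solution `y` has `(p + n) ∧ d(y) = f n` for all `n`, which forces `d(y) = D`, and its initial
segments `y(0, f n) = x_n(0, f n)` then determine all of `y`.
-/

section Wedge

variable {k : ℕ}

lemma leDeg_of_le {q q' : Fin k → ℕ} {D : Fin k → ℕ∞} (h : q ≤ q')
    (h' : leDeg k q' D) : leDeg k q D := fun i =>
  le_trans (by exact_mod_cast h i) (h' i)

lemma wedge_le (m : Fin k → ℕ) (d : Fin k → ℕ∞) : wedge m d ≤ m := fun i => by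
  have h : ((wedge m d i : ℕ) : ℕ∞) ≤ m i := by
    rw [wedge_coe]
    exact inf_le_left
  exact_mod_cast h

lemma le_wedge {q m : Fin k → ℕ} {d : Fin k → ℕ∞} (hm : q ≤ m) (hd : leDeg k q d) :
    q ≤ wedge m d := fun i => by
  have h : (q i : ℕ∞) ≤ wedge m d i := by
    rw [wedge_coe]
    exact le_inf (by exact_mod_cast hm i) (hd i)
  exact_mod_cast h

lemma wedge_mono_left {m m' : Fin k → ℕ} (d : Fin k → ℕ∞) (h : m ≤ m') :
    wedge m d ≤ wedge m' d := fun i => by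
  have h' : ((wedge m d i : ℕ) : ℕ∞) ≤ wedge m' d i := by
    rw [wedge_coe, wedge_coe]
    exact inf_le_inf_right _ (by exact_mod_cast h i)
  exact_mod_cast h'

lemma apply_eq_wedge_of_wedge_lt {m : Fin k → ℕ} {d : Fin k → ℕ∞} {i : Fin k}
    (h : wedge m d i < m i) : d i = wedge m d i := by
  have h' : (m i : ℕ∞) ⊓ d i < m i := by
    rw [← wedge_coe]
    exact_mod_cast h
  rw [wedge_coe, inf_eq_right.mpr (not_le.mp (inf_lt_left.mp h')).le]

lemma iSup_wedge_add (p : Fin k → ℕ) (d : Fin k → ℕ∞) (i : Fin k) :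
    ⨆ n : Fin k → ℕ, ((wedge (p + n) d i : ℕ) : ℕ∞) = d i := by
  refine le_antisymm (iSup_le fun n => (wedge_leDeg _ d) i) ?_
  refine ENat.forall_natCast_le_iff_le.mp fun a ha => le_iSup_of_le (fun _ => a) ?_
  rw [wedge_coe]
  exact le_inf (by exact_mod_cast Nat.le_add_left a (p i)) ha

end Wedge

namespace BPath

variable {k : ℕ} {Λ : KGraphData k}

lemma eq_of_seg_zero_eq (x y : BPath k Λ) {s t : Fin k → ℕ} (hs : leDeg k s x.deg)
    (ht : leDeg k t y.deg) (h : x.seg 0 s = y.seg 0 t) : s = t := by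
  have hd := congrArg Λ.d h
  rwa [x.seg_deg 0 s zero_le hs, y.seg_deg 0 t zero_le ht, tsub_zero,
    tsub_zero] at hd

lemma seg_halves_eq_of_seg_eq (hΛ : IsKGraph Λ) (x y : BPath k Λ) {a m t : Fin k → ℕ}
    (ham : a ≤ m) (hmt : m ≤ t) (hx : leDeg k t x.deg) (hy : leDeg k t y.deg)
    (h : x.seg a t = y.seg a t) :
    x.seg a m = y.seg a m ∧ x.seg m t = y.seg m t := by
  have hd : Λ.d (x.seg a t) = (m - a) + (t - m) := by
    rw [x.seg_deg a t (ham.trans hmt) hx]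
    funext i
    have hami : a i ≤ m i := ham i
    have hmti : m i ≤ t i := hmt i
    simp only [Pi.sub_apply, Pi.add_apply]
    omega
  have factors (z : BPath k Λ) (hz : leDeg k t z.deg) :
      Λ.s (z.seg a m) = Λ.r (z.seg m t) ∧ Λ.d (z.seg a m) = m - a ∧
        Λ.d (z.seg m t) = t - m ∧ Λ.comp (z.seg a m) (z.seg m t) = z.seg a t :=
    ⟨by rw [z.seg_s a m ham (leDeg_of_le hmt hz), z.seg_r m t hmt hz],
      z.seg_deg a m ham (leDeg_of_le hmt hz), z.seg_deg m t hmt hz,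
      z.seg_comp a m t ham hmt hz⟩
  obtain ⟨_, -, huniq⟩ := hΛ.factor (x.seg a t) (m - a) (t - m) hd
  obtain ⟨hys, hyd₁, hyd₂, hycomp⟩ := factors y hy
  have hxy := (huniq (x.seg a m, x.seg m t) (factors x hx)).trans
    (huniq (y.seg a m, y.seg m t) ⟨hys, hyd₁, hyd₂, hycomp.trans h.symm⟩).symm
  exact Prod.ext_iff.mp hxy

lemma seg_eq_seg_of_seg_eq (hΛ : IsKGraph Λ) (x y : BPath k Λ) {a p q t : Fin k → ℕ}
    (hap : a ≤ p) (hpq : p ≤ q) (hqt : q ≤ t)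
    (hx : leDeg k t x.deg) (hy : leDeg k t y.deg) (h : x.seg a t = y.seg a t) :
    x.seg p q = y.seg p q := by
  have hpt := (seg_halves_eq_of_seg_eq hΛ x y hap (hpq.trans hqt) hx hy h).2
  exact (seg_halves_eq_of_seg_eq hΛ x y hpq hqt hx hy hpt).1

end BPath

lemma prel_iff_seg_zero_eq {k : ℕ} {Λ : KGraphData k} {x y : BPath k Λ} {p q : Fin k → ℕ}
    (hx : wedge p x.deg = 0) (hy : wedge p y.deg = 0) :
    PRel (x, p, q) (y, p, q) ↔ x.seg 0 (wedge q x.deg) = y.seg 0 (wedge q y.deg) := by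
  simp only [PRel, hx, hy, and_true]

section Limit

variable {k : ℕ} {Λ : KGraphData k}

structure IsCoherentFamily (p : Fin k → ℕ) (X : (Fin k → ℕ) → BPath k Λ) : Prop where
  wedge_eq_zero : ∀ n, wedge p (X n).deg = 0
  prel : ∀ a b, a ≤ b → PRel (X a, p, p + a) (X b, p, p + a)

noncomputable def truncDeg (p : Fin k → ℕ) (X : (Fin k → ℕ) → BPath k Λ) (n : Fin k → ℕ) :
    Fin k → ℕ :=
  wedge (p + n) (X n).deg

noncomputable def limDeg (p : Fin k → ℕ) (X : (Fin k → ℕ) → BPath k Λ) : Fin k → ℕ∞ :=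
  fun i => ⨆ n, (truncDeg p X n i : ℕ∞)

lemma leDeg_of_le_truncDeg {p q n : Fin k → ℕ} {X : (Fin k → ℕ) → BPath k Λ}
    (h : q ≤ truncDeg p X n) : leDeg k q (X n).deg :=
  leDeg_of_le h (wedge_leDeg _ _)

namespace IsCoherentFamily

variable {p : Fin k → ℕ} {X : (Fin k → ℕ) → BPath k Λ} (hX : IsCoherentFamily p X)
include hX

lemma seg_zero_eq {a b : Fin k → ℕ} (hab : a ≤ b) :
    (X a).seg 0 (truncDeg p X a) = (X b).seg 0 (wedge (p + a) (X b).deg) :=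
  (prel_iff_seg_zero_eq (hX.wedge_eq_zero a) (hX.wedge_eq_zero b)).mp (hX.prel a b hab)

lemma wedge_add_deg_eq {a b : Fin k → ℕ} (hab : a ≤ b) :
    wedge (p + a) (X b).deg = truncDeg p X a :=
  ((X a).eq_of_seg_zero_eq (X b) (wedge_leDeg _ _) (wedge_leDeg _ _) (hX.seg_zero_eq hab)).symm

lemma truncDeg_mono : Monotone (truncDeg p X) := fun _ _ hab =>
  hX.wedge_add_deg_eq hab ▸ wedge_mono_left _ (add_le_add le_rfl hab)

lemma seg_eq_seg (hΛ : IsKGraph Λ) {a b p' q' : Fin k → ℕ} (hpq : p' ≤ q')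
    (ha : q' ≤ truncDeg p X a) (hb : q' ≤ truncDeg p X b) :
    (X a).seg p' q' = (X b).seg p' q' := by
  have of_le {a b : Fin k → ℕ} (hab : a ≤ b) (ha : q' ≤ truncDeg p X a) :
      (X a).seg p' q' = (X b).seg p' q' := by
    have hseg := hX.seg_zero_eq hab
    rw [hX.wedge_add_deg_eq hab] at hseg
    refine (X a).seg_eq_seg_of_seg_eq hΛ (X b) zero_le hpq ha (wedge_leDeg _ _) ?_ hseg
    rw [← hX.wedge_add_deg_eq hab]
    exact wedge_leDeg _ _
  exact (of_le le_sup_left ha).trans (of_le le_sup_right hb).symm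

lemma vert_eq_vert (hΛ : IsKGraph Λ) {a b q : Fin k → ℕ}
    (ha : q ≤ truncDeg p X a) (hb : q ≤ truncDeg p X b) :
    (X a).vert q = (X b).vert q := by
  rw [← (X a).seg_r q q le_rfl (leDeg_of_le_truncDeg ha),
    ← (X b).seg_r q q le_rfl (leDeg_of_le_truncDeg hb), hX.seg_eq_seg hΛ le_rfl ha hb]

lemma wedge_add_limDeg (n : Fin k → ℕ) : wedge (p + n) (limDeg p X) = truncDeg p X n := by
  funext i
  apply Nat.cast_injective (R := ℕ∞)
  refine le_antisymm ?_ ?_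
  · rw [wedge_coe, limDeg, inf_iSup_eq]
    refine iSup_le fun m => ?_
    calc ((p + n) i : ℕ∞) ⊓ truncDeg p X m i
        ≤ ((p + n) i : ℕ∞) ⊓ truncDeg p X (m ⊔ n) i :=
          inf_le_inf_left _ (by exact_mod_cast hX.truncDeg_mono le_sup_left i)
      _ ≤ ((p + n) i : ℕ∞) ⊓ (X (m ⊔ n)).deg i := inf_le_inf_left _ (wedge_leDeg _ _ i)
      _ = truncDeg p X n i := by rw [← wedge_coe, hX.wedge_add_deg_eq le_sup_right]
  · have hD : leDeg k (truncDeg p X n) (limDeg p X) := fun j =>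
      le_iSup (fun m => (truncDeg p X m j : ℕ∞)) n
    exact_mod_cast le_wedge (wedge_le _ _) hD i

lemma wedge_limDeg_eq_zero : wedge p (limDeg p X) = 0 := by
  simpa [truncDeg, hX.wedge_eq_zero] using hX.wedge_add_limDeg 0

lemma le_truncDeg_self {q : Fin k → ℕ} (hq : leDeg k q (limDeg p X)) :
    q ≤ truncDeg p X q :=
  hX.wedge_add_limDeg q ▸ le_wedge le_add_self hq

lemma deg_apply_eq_of_apply_eq_limDeg {q : Fin k → ℕ} {i : Fin k}
    (hq : leDeg k q (limDeg p X)) (hqi : (q i : ℕ∞) = limDeg p X i) :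
    q ≤ truncDeg p X (q + 1) ∧ (X (q + 1)).deg i = q i := by
  have hle : q ≤ truncDeg p X (q + 1) :=
    hX.wedge_add_limDeg (q + 1) ▸ le_wedge (fun j => by simp only [Pi.add_apply]; omega) hq
  have hfi : truncDeg p X (q + 1) i = q i := by
    apply Nat.cast_injective (R := ℕ∞)
    rw [← hX.wedge_add_limDeg, wedge_coe, ← hqi, inf_eq_right.mpr]
    exact_mod_cast (show q i ≤ p i + (q i + 1) by omega)
  have hlt : truncDeg p X (q + 1) i < (p + (q + 1)) i := by
    rw [hfi]
    simp only [Pi.add_apply, Pi.one_apply]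
    omega
  refine ⟨hle, ?_⟩
  rw [apply_eq_wedge_of_wedge_lt hlt]
  exact_mod_cast hfi

noncomputable def limPath (hΛ : IsKGraph Λ) : BPath k Λ where
  deg := limDeg p X
  vert q := (X q).vert q
  seg p' q' := (X q').seg p' q'
  seg_r p' q' hpq hq := by
    have hq' := hX.le_truncDeg_self hq
    rw [(X q').seg_r p' q' hpq (leDeg_of_le_truncDeg hq')]
    exact hX.vert_eq_vert hΛ (hpq.trans hq') (hX.le_truncDeg_self (leDeg_of_le hpq hq))
  seg_s _ _ hpq hq := (X _).seg_s _ _ hpq (leDeg_of_le_truncDeg (hX.le_truncDeg_self hq))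
  seg_deg _ _ hpq hq := (X _).seg_deg _ _ hpq (leDeg_of_le_truncDeg (hX.le_truncDeg_self hq))
  seg_id q hq := (X q).seg_id q (leDeg_of_le_truncDeg (hX.le_truncDeg_self hq))
  seg_comp p' q' t hpq hqt ht := by
    have ht' := hX.le_truncDeg_self ht
    rw [hX.seg_eq_seg hΛ hpq (hX.le_truncDeg_self (leDeg_of_le hqt ht)) (hqt.trans ht')]
    exact (X t).seg_comp p' q' t hpq hqt (leDeg_of_le_truncDeg ht')
  boundary q i hq hqi e he := by
    obtain ⟨hle, hdeg⟩ := hX.deg_apply_eq_of_apply_eq_limDeg hq hqi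
    refine (X (q + 1)).boundary q i (leDeg_of_le_truncDeg hle) hdeg.symm e ?_
    exact he.trans (hX.vert_eq_vert hΛ (hX.le_truncDeg_self hq) hle)

lemma prel_limPath (hΛ : IsKGraph Λ) (n : Fin k → ℕ) :
    PRel (hX.limPath hΛ, p, p + n) (X n, p, p + n) := by
  refine (prel_iff_seg_zero_eq hX.wedge_limDeg_eq_zero (hX.wedge_eq_zero n)).mpr ?_
  change (X (wedge (p + n) (limDeg p X))).seg 0 (wedge (p + n) (limDeg p X)) =
    (X n).seg 0 (truncDeg p X n)
  rw [hX.wedge_add_limDeg n]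
  have hn : truncDeg p X n ≤ truncDeg p X (truncDeg p X n) :=
    hX.le_truncDeg_self (hX.wedge_add_limDeg n ▸ wedge_leDeg _ _)
  exact hX.seg_eq_seg hΛ zero_le hn le_rfl

lemma eqv_limPath (hΛ : IsKGraph Λ) {y : BPath k Λ} (hy : wedge p y.deg = 0)
    (hyX : ∀ n, PRel (y, p, p + n) (X n, p, p + n)) : y.eqv (hX.limPath hΛ) := by
  have hseg n := (prel_iff_seg_zero_eq hy (hX.wedge_eq_zero n)).mp (hyX n)
  have hwedge n : wedge (p + n) y.deg = truncDeg p X n :=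
    y.eq_of_seg_zero_eq (X n) (wedge_leDeg _ _) (wedge_leDeg _ _) (hseg n)
  have hdeg : y.deg = limDeg p X := funext fun i => by
    simp only [limDeg, ← hwedge, iSup_wedge_add]
  refine ⟨hdeg, fun p' q' hpq hq => ?_⟩
  rw [hdeg] at hq
  have hq' := hX.le_truncDeg_self hq
  refine y.seg_eq_seg_of_seg_eq hΛ (X q') zero_le hpq hq' ?_ (leDeg_of_le_truncDeg le_rfl) ?_
  · exact hwedge q' ▸ wedge_leDeg _ _
  · exact (congrArg (y.seg 0) (hwedge q')).symm.trans (hseg q')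

end IsCoherentFamily

end Limit

theorem exists_unique_limit_boundary_path_general (k : ℕ) (Λ : KGraphData k)
    (hΛ : IsKGraph Λ)
    (p : Fin k → ℕ) (X : (Fin k → ℕ) → BPath k Λ)
    (h0 : ∀ n, wedge p (X n).deg = 0)
    (hcoh : ∀ a b : Fin k → ℕ, a ≤ b → PRel (X a, p, p + a) (X b, p, p + a)) :
    ∃ x : BPath k Λ,
      (wedge p x.deg = 0 ∧ ∀ n, PRel (x, p, p + n) (X n, p, p + n)) ∧
      ∀ x' : BPath k Λ,
        (wedge p x'.deg = 0 ∧ ∀ n, PRel (x', p, p + n) (X n, p, p + n)) →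
        BPath.eqv x' x := by
  have hX : IsCoherentFamily p X := ⟨h0, hcoh⟩
  exact ⟨hX.limPath hΛ, ⟨hX.wedge_limDeg_eq_zero, hX.prel_limPath hΛ⟩,
    fun _ ⟨hy, hyX⟩ => hX.eqv_limPath hΛ hy hyX⟩

/-- Given `p ∈ ℕ^k` and a coherent family `(x_n)_{n ∈ ℕ^k}` of
boundary paths with `p ∧ d(x_n) = 0` and `(x_a;(p,p+a)) ≈ (x_b;(p,p+a))` for
`a ≤ b`, there is a unique boundary path `x` with `p ∧ d(x) = 0` and
`(x;(p,p+n)) ≈ (x_n;(p,p+n))` for all `n`. -/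
theorem exists_unique_limit_boundary_path (k : ℕ) (hk : 1 ≤ k) (Λ : KGraphData k)
    (hΛ : IsKGraph Λ) (hrf : RowFinite Λ) (hlc : LocallyConvex Λ)
    (p : Fin k → ℕ) (X : (Fin k → ℕ) → BPath k Λ)
    (h0 : ∀ n, wedge p (X n).deg = 0)
    (hcoh : ∀ a b : Fin k → ℕ, a ≤ b → PRel (X a, p, p + a) (X b, p, p + a)) :
    ∃ x : BPath k Λ,
      (wedge p x.deg = 0 ∧ ∀ n, PRel (x, p, p + n) (X n, p, p + n)) ∧
      ∀ x' : BPath k Λ,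
        (wedge p x'.deg = 0 ∧ ∀ n, PRel (x', p, p + n) (X n, p, p + n)) →
        BPath.eqv x' x :=
  exists_unique_limit_boundary_path_general k Λ hΛ p X h0 hcoh
end

section
/- Let Λ be a row-finite, locally convex k-graph and suppose Λ has local periodicity m, n at v ∈ Λ^0 (where m ≠ n ∈ ℕ^k). Fix x ∈ vΛ^{≤∞} and set μ := x(0, m∧d(x)), α := x(m∧d(x), (m∨n)∧d(x)), and ν := x(0, n∧d(x)). Then d(μ) ≠ d(ν), and μαy = ναy for every boundary path y ∈ s(α)Λ^{≤∞} (where μαy and ναy denote the concatenations of the morphisms μα and να with y). -/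
open scoped ENat

/-!
Periodicity at `v` forces `d(x)` to be infinite in every coordinate where `m` and `n` differ, so
`m ∧ d(x) ≠ n ∧ d(x)`. The path `z = μαy` again has range `v`, and the boundary condition at
`s(α)` gives `m ∧ d(z) = m ∧ d(x)` and `n ∧ d(z) = n ∧ d(x)`. Periodicity applied to `z` itself
then shows that `z` begins with `να` and continues as `y`; concatenations being unique, `z = ναy`.
-/

section

variable {k : ℕ}

lemma wedge_apply_of_eq_top (m : Fin k → ℕ) {D : Fin k → ℕ∞} {i : Fin k} (h : D i = ⊤) :
    wedge m D i = m i := by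
  simp [wedge, h]

lemma wedge_apply_of_eq_coe (m : Fin k → ℕ) {D : Fin k → ℕ∞} {i : Fin k} {a : ℕ}
    (h : D i = a) : wedge m D i = min (m i) a := by
  rw [wedge, h]
  norm_cast

lemma wedge_apply_congr {m n : Fin k → ℕ} (D : Fin k → ℕ∞) {i : Fin k} (h : m i = n i) :
    wedge m D i = wedge n D i := by
  simp [wedge, h]

lemma wedge_mono {m n : Fin k → ℕ} (h : m ≤ n) (D : Fin k → ℕ∞) : wedge m D ≤ wedge n D :=
  fun i => by
    have : (wedge m D i : ℕ∞) ≤ wedge n D i := by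
      rw [wedge_coe, wedge_coe]
      exact inf_le_inf_right _ (by exact_mod_cast h i)
    exact_mod_cast this

lemma leDeg_of_le_s10 {p q : Fin k → ℕ} {D : Fin k → ℕ∞} (hpq : p ≤ q) (hq : leDeg k q D) :
    leDeg k p D :=
  fun i => le_trans (by exact_mod_cast hpq i) (hq i)

lemma leDeg_sup {p q : Fin k → ℕ} {D : Fin k → ℕ∞} (hp : leDeg k p D) (hq : leDeg k q D) :
    leDeg k (p ⊔ q) D :=
  fun i => by
    rw [Pi.sup_apply, Nat.mono_cast.map_sup]
    exact sup_le (hp i) (hq i)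

lemma leDeg_tsub_of_add {q n : Fin k → ℕ} {D : Fin k → ℕ∞} (h : leDeg k (q + n) D) :
    leDeg k q (fun i => D i - n i) :=
  fun i => ENat.le_sub_of_add_le_right (ENat.natCast_ne_top _) (by exact_mod_cast h i)

lemma leDeg_sub_of_le_add {p q : Fin k → ℕ} {D : Fin k → ℕ∞}
    (h : ∀ i, (p i : ℕ∞) ≤ q i + D i) : leDeg k (p - q) D :=
  fun i => by
    rw [Pi.sub_apply, ENat.natCast_sub]
    exact tsub_le_iff_left.mpr (h i)

variable {Λ : KGraphData k}

theorem IsKGraph.eq_of_comp_eq (hΛ : IsKGraph Λ) {f g f' g' : Λ.Mor}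
    (hfg : Λ.s f = Λ.r g) (hfg' : Λ.s f' = Λ.r g') (hf : Λ.d f = Λ.d f')
    (hg : Λ.d g = Λ.d g') (h : Λ.comp f g = Λ.comp f' g') : f = f' ∧ g = g' := by
  obtain ⟨_, -, huniq⟩ := hΛ.factor _ _ _ (hΛ.d_comp f g hfg)
  exact Prod.ext_iff.mp <| (huniq (f, g) ⟨hfg, rfl, rfl, rfl⟩).trans
    (huniq (f', g') ⟨hfg', hf.symm, hg.symm, h.symm⟩).symm

namespace BPath

theorem seg_eq_and_seg_eq_of_seg_eq (hΛ : IsKGraph Λ) {u u' : BPath k Λ} {a b c : Fin k → ℕ}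
    (hab : a ≤ b) (hbc : b ≤ c) (hc : leDeg k c u.deg) (hc' : leDeg k c u'.deg)
    (h : u.seg a c = u'.seg a c) : u.seg a b = u'.seg a b ∧ u.seg b c = u'.seg b c := by
  have hb := leDeg_of_le_s10 hbc hc
  have hb' := leDeg_of_le_s10 hbc hc'
  refine hΛ.eq_of_comp_eq ?_ ?_ ?_ ?_ ?_
  · rw [u.seg_s a b hab hb, u.seg_r b c hbc hc]
  · rw [u'.seg_s a b hab hb', u'.seg_r b c hbc hc']
  · rw [u.seg_deg a b hab hb, u'.seg_deg a b hab hb']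
  · rw [u.seg_deg b c hbc hc, u'.seg_deg b c hbc hc']
  · rw [u.seg_comp a b c hab hbc hc, u'.seg_comp a b c hab hbc hc', h]

theorem seg_eq_of_seg_zero_eq (hΛ : IsKGraph Λ) {u u' : BPath k Λ} {T : Fin k → ℕ}
    (hT : leDeg k T u.deg) (hT' : leDeg k T u'.deg) (h : u.seg 0 T = u'.seg 0 T)
    {a b : Fin k → ℕ} (hab : a ≤ b) (hbT : b ≤ T) : u.seg a b = u'.seg a b :=
  (seg_eq_and_seg_eq_of_seg_eq hΛ hab hbT hT hT'
    (seg_eq_and_seg_eq_of_seg_eq hΛ zero_le (hab.trans hbT) hT hT' h).2).1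

theorem deg_eq_zero_of_forall_ne (y : BPath k Λ) (i : Fin k)
    (h : ∀ e, Λ.r e = y.vert 0 → Λ.d e ≠ Pi.single i 1) : y.deg i = 0 := by
  by_contra hne
  have hi : leDeg k (Pi.single i 1) y.deg := by
    intro j
    rcases eq_or_ne j i with rfl | hji
    · simpa using Order.one_le_iff_ne_zero.mpr hne
    · simp [hji]
  refine h _ (y.seg_r 0 _ zero_le hi) ?_
  rw [y.seg_deg 0 _ zero_le hi, tsub_zero]

end BPath

namespace IsConcat

variable {lam : Λ.Mor} {y z : BPath k Λ}

lemma leDeg_d (h : IsConcat Λ lam y z) : leDeg k (Λ.d lam) z.deg :=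
  fun i => by rw [h.1]; exact le_self_add

lemma vert_zero_eq (h : IsConcat Λ lam y z) : z.vert 0 = Λ.r lam := by
  rw [← z.seg_r 0 _ zero_le h.leDeg_d, h.2.1]

theorem seg_zero_eq (h : IsConcat Λ lam y z) {R : Fin k → ℕ} (hR : Λ.d lam ≤ R)
    (hRz : leDeg k R z.deg) : z.seg 0 R = Λ.comp lam (y.seg 0 (R - Λ.d lam)) := by
  obtain ⟨hdeg, hlam, hy⟩ := h
  have hRy : leDeg k (R - Λ.d lam) y.deg :=
    leDeg_sub_of_le_add fun i => by simpa only [hdeg] using hRz i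
  rw [← z.seg_comp 0 (Λ.d lam) R zero_le hR hRz, hlam, ← hy _ hRy, add_tsub_cancel_of_le hR]

theorem eqv (hΛ : IsKGraph Λ) {w : BPath k Λ} (hz : IsConcat Λ lam y z)
    (hw : IsConcat Λ lam y w) : z.eqv w := by
  have hdeg : z.deg = w.deg := hz.1.trans hw.1.symm
  refine ⟨hdeg, fun p q hpq hq => ?_⟩
  have hRz : leDeg k (q ⊔ Λ.d lam) z.deg := leDeg_sup hq hz.leDeg_d
  have hRw : leDeg k (q ⊔ Λ.d lam) w.deg := hdeg ▸ hRz
  refine BPath.seg_eq_of_seg_zero_eq hΛ hRz hRw ?_ hpq le_sup_left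
  rw [hz.seg_zero_eq le_sup_right hRz, hw.seg_zero_eq le_sup_right hRw]

/-- In a coordinate where `c ∧ d(x) = d(x)`, the boundary condition of `x` forbids `y` to move. -/
theorem wedge_eq {c l : Fin k → ℕ} (hl : l ≤ c) {x : BPath k Λ}
    (hy : y.vert 0 = x.vert (wedge c x.deg)) (hz : IsConcat Λ (x.seg 0 (wedge c x.deg)) y z) :
    wedge l z.deg = wedge l x.deg := by
  funext i
  have hzdeg : z.deg i = wedge c x.deg i + y.deg i := by
    rw [hz.1, x.seg_deg 0 _ zero_le (wedge_leDeg c x.deg), tsub_zero]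
  apply Nat.cast_injective (R := ℕ∞)
  rw [wedge_coe, wedge_coe]
  by_cases hsat : (wedge c x.deg i : ℕ∞) = x.deg i
  · have hy0 : y.deg i = 0 := y.deg_eq_zero_of_forall_ne i fun e he =>
      x.boundary _ i (wedge_leDeg c x.deg) hsat e (he.trans hy)
    rw [hzdeg, hy0, add_zero, hsat]
  · rw [wedge_coe, inf_eq_right, not_le] at hsat
    have hwc : (wedge c x.deg i : ℕ∞) = c i := by rw [wedge_coe, inf_eq_left.mpr hsat.le]
    have hlc : (l i : ℕ∞) ≤ c i := by exact_mod_cast hl i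
    have hlz : (l i : ℕ∞) ≤ z.deg i := by rw [hzdeg, hwc]; exact hlc.trans le_self_add
    rw [inf_eq_left.mpr (hlc.trans hsat.le), inf_eq_left.mpr hlz]

end IsConcat

namespace LocalPeriodicity

variable {m n : Fin k → ℕ} {v : Λ.Obj}

theorem deg_eq_top (hlp : LocalPeriodicity Λ m n v) {x : BPath k Λ} (hx : x.vert 0 = v)
    {i : Fin k} (hi : m i ≠ n i) : x.deg i = ⊤ := by
  obtain ⟨hrem, hdeg, -⟩ := hlp x hx
  by_contra hfin
  obtain ⟨a, ha⟩ := ENat.ne_top_iff_exists.mp hfin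
  have hrem_i := congrFun hrem i
  have hdeg_i := congrFun hdeg i
  simp only [BPath.shift, Pi.sub_apply, ← ha, wedge_apply_of_eq_coe _ ha.symm] at hrem_i hdeg_i
  norm_cast at hdeg_i
  omega

theorem wedge_ne (hlp : LocalPeriodicity Λ m n v) (hmn : m ≠ n) {x : BPath k Λ}
    (hx : x.vert 0 = v) : wedge m x.deg ≠ wedge n x.deg := by
  obtain ⟨i, hi⟩ := Function.ne_iff.mp hmn
  have htop := hlp.deg_eq_top hx hi
  intro h
  exact hi (by simpa [wedge_apply_of_eq_top _ htop] using congrFun h i)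

theorem seg_add_eq (hlp : LocalPeriodicity Λ m n v) {x : BPath k Λ} (hx : x.vert 0 = v)
    {p q : Fin k → ℕ} (hpq : p ≤ q) (hq : leDeg k (q + wedge m x.deg) x.deg) :
    x.seg (p + wedge m x.deg) (q + wedge m x.deg) =
      x.seg (p + wedge n x.deg) (q + wedge n x.deg) :=
  (hlp x hx).2.2 p q hpq (leDeg_tsub_of_add hq)

theorem vert_wedge_eq (hlp : LocalPeriodicity Λ m n v) {x : BPath k Λ} (hx : x.vert 0 = v) :
    x.vert (wedge m x.deg) = x.vert (wedge n x.deg) := by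
  have h := congrArg Λ.r <|
    hlp.seg_add_eq hx le_rfl (p := 0) (by simpa using wedge_leDeg m x.deg)
  simp only [zero_add] at h
  rwa [x.seg_r _ _ le_rfl (wedge_leDeg m x.deg), x.seg_r _ _ le_rfl (wedge_leDeg n x.deg)] at h

/-- The two sides can differ only where `m i ≠ n i`, and there `d(z)` is infinite since `z` has
range `v`. -/
theorem deg_eq_of_isConcat (hlp : LocalPeriodicity Λ m n v) {x : BPath k Λ}
    (hx : x.vert 0 = v) {y z : BPath k Λ}
    (hz : IsConcat Λ (x.seg 0 (wedge (m ⊔ n) x.deg)) y z) (i : Fin k) :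
    z.deg i = (wedge n x.deg i + (wedge (m ⊔ n) x.deg i - wedge m x.deg i) : ℕ) + y.deg i := by
  have hPx := wedge_leDeg (m ⊔ n) x.deg
  have hzdeg : z.deg i = wedge (m ⊔ n) x.deg i + y.deg i := by
    rw [hz.1, x.seg_deg 0 _ zero_le hPx, tsub_zero]
  by_cases hi : m i = n i
  · have hMN := wedge_apply_congr x.deg hi
    have hMP : wedge m x.deg i ≤ wedge (m ⊔ n) x.deg i := wedge_mono le_sup_left _ i
    rw [hzdeg, hMN, add_tsub_cancel_of_le (hMN ▸ hMP)]
  · have htop := hlp.deg_eq_top (by rw [hz.vert_zero_eq, x.seg_r 0 _ zero_le hPx, hx]) hi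
    rw [hzdeg, ENat.add_eq_top] at htop
    rw [hzdeg, htop.resolve_left (ENat.natCast_ne_top _), add_top, add_top]

theorem isConcat_comp (hΛ : IsKGraph Λ) (hlp : LocalPeriodicity Λ m n v) {x : BPath k Λ}
    (hx : x.vert 0 = v) {y z : BPath k Λ} (hy : y.vert 0 = x.vert (wedge (m ⊔ n) x.deg))
    (hz : IsConcat Λ (x.seg 0 (wedge (m ⊔ n) x.deg)) y z) :
    IsConcat Λ
      (Λ.comp (x.seg 0 (wedge n x.deg)) (x.seg (wedge m x.deg) (wedge (m ⊔ n) x.deg))) y z := by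
  have hdeg := hlp.deg_eq_of_isConcat hx hz
  have hzv : z.vert 0 = v := by
    rw [hz.vert_zero_eq, x.seg_r 0 _ zero_le (wedge_leDeg _ _), hx]
  have hper := fun p q (hpq : p ≤ q) hq => hlp.seg_add_eq hzv (p := p) (q := q) hpq hq
  rw [hz.wedge_eq le_sup_left hy, hz.wedge_eq le_sup_right hy] at hper
  have hvMN := hlp.vert_wedge_eq hx
  have hMP : wedge m x.deg ≤ wedge (m ⊔ n) x.deg := wedge_mono le_sup_left _
  have hNP : wedge n x.deg ≤ wedge (m ⊔ n) x.deg := wedge_mono le_sup_right _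
  have hPx := wedge_leDeg (m ⊔ n) x.deg
  have hNx := wedge_leDeg n x.deg
  generalize wedge m x.deg = M, wedge n x.deg = N, wedge (m ⊔ n) x.deg = P at *
  have hdP : Λ.d (x.seg 0 P) = P := by rw [x.seg_deg 0 P zero_le hPx, tsub_zero]
  have hPz : leDeg k P z.deg := hdP ▸ hz.leDeg_d
  have hz0P : z.seg 0 P = x.seg 0 P := by simpa only [hdP] using hz.2.1
  have hd : Λ.d (Λ.comp (x.seg 0 N) (x.seg M P)) = N + (P - M) := by
    have hsr : Λ.s (x.seg 0 N) = Λ.r (x.seg M P) := by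
      rw [x.seg_s 0 N zero_le hNx, x.seg_r M P hMP hPx, hvMN]
    rw [hΛ.d_comp _ _ hsr, x.seg_deg 0 N zero_le hNx, x.seg_deg M P hMP hPx, tsub_zero]
  have hshift : P - M + M = P := tsub_add_cancel_of_le hMP
  refine ⟨by rw [hd]; exact funext hdeg, ?_, fun p hp => ?_⟩
  · have hQz : leDeg k (N + (P - M)) z.deg := fun i => by rw [hdeg]; exact le_self_add
    have hα : z.seg N (N + (P - M)) = z.seg M P := by
      simpa only [zero_add, add_zero, hshift, add_comm _ N] using
        (hper 0 (P - M) zero_le (by rwa [hshift])).symm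
    rw [hd, ← z.seg_comp 0 N _ zero_le le_self_add hQz, hα,
      BPath.seg_eq_of_seg_zero_eq hΛ hPz hPx hz0P zero_le hNP,
      BPath.seg_eq_of_seg_zero_eq hΛ hPz hPx hz0P hMP le_rfl]
  · have hPp : leDeg k (P + p) z.deg := fun i => by
      rw [hz.1, hdP, Pi.add_apply, Nat.cast_add]
      exact add_le_add_right (hp i) _
    have hβ : z.seg (N + (P - M)) (N + (P - M) + p) = z.seg P (P + p) := by
      simpa only [add_right_comm _ p, hshift, add_comm _ N] using
        (hper (P - M) (P - M + p) le_self_add (by rwa [add_right_comm, hshift])).symm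
    rw [hd, hβ]
    simpa only [hdP] using hz.2.2 p hp

end LocalPeriodicity

end

theorem periodicity_factorisation_general (k : ℕ) (Λ : KGraphData k)
    (hΛ : IsKGraph Λ)
    (v : Λ.Obj) (m n : Fin k → ℕ) (hmn : m ≠ n)
    (hlp : LocalPeriodicity Λ m n v) (x : BPath k Λ) (hx : x.vert 0 = v) :
    Λ.d (x.seg 0 (wedge m x.deg)) ≠ Λ.d (x.seg 0 (wedge n x.deg)) ∧
    ∀ y z w : BPath k Λ,
      y.vert 0 = Λ.s (x.seg (wedge m x.deg) (wedge (m ⊔ n) x.deg)) →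
      IsConcat Λ
        (Λ.comp (x.seg 0 (wedge m x.deg))
          (x.seg (wedge m x.deg) (wedge (m ⊔ n) x.deg))) y z →
      IsConcat Λ
        (Λ.comp (x.seg 0 (wedge n x.deg))
          (x.seg (wedge m x.deg) (wedge (m ⊔ n) x.deg))) y w →
      BPath.eqv z w := by
  have hMP : wedge m x.deg ≤ wedge (m ⊔ n) x.deg := wedge_mono le_sup_left _
  have hPx := wedge_leDeg (m ⊔ n) x.deg
  refine ⟨?_, fun y z w hy hz hw => ?_⟩
  · rw [x.seg_deg 0 _ zero_le (wedge_leDeg m x.deg), x.seg_deg 0 _ zero_le (wedge_leDeg n x.deg),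
      tsub_zero, tsub_zero]
    exact hlp.wedge_ne hmn hx
  · rw [x.seg_s _ _ hMP hPx] at hy
    rw [x.seg_comp 0 _ _ zero_le hMP hPx] at hz
    exact (hlp.isConcat_comp hΛ hx hy hz).eqv hΛ hw

/-- Suppose `Λ` has local periodicity `m, n` at `v` (`m ≠ n`),
`x ∈ vΛ^{≤∞}`, and set `μ := x(0, m∧d(x))`, `α := x(m∧d(x), (m∨n)∧d(x))`,
`ν := x(0, n∧d(x))`. Then `d(μ) ≠ d(ν)`, and `μαy = ναy` for every boundary
path `y ∈ s(α)Λ^{≤∞}`. -/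
theorem periodicity_factorisation (k : ℕ) (hk : 1 ≤ k) (Λ : KGraphData k)
    (hΛ : IsKGraph Λ) (hrf : RowFinite Λ) (hlc : LocallyConvex Λ)
    (v : Λ.Obj) (m n : Fin k → ℕ) (hmn : m ≠ n)
    (hlp : LocalPeriodicity Λ m n v) (x : BPath k Λ) (hx : x.vert 0 = v) :
    Λ.d (x.seg 0 (wedge m x.deg)) ≠ Λ.d (x.seg 0 (wedge n x.deg)) ∧
    ∀ y z w : BPath k Λ,
      y.vert 0 = Λ.s (x.seg (wedge m x.deg) (wedge (m ⊔ n) x.deg)) →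
      IsConcat Λ
        (Λ.comp (x.seg 0 (wedge m x.deg))
          (x.seg (wedge m x.deg) (wedge (m ⊔ n) x.deg))) y z →
      IsConcat Λ
        (Λ.comp (x.seg 0 (wedge n x.deg))
          (x.seg (wedge m x.deg) (wedge (m ⊔ n) x.deg))) y w →
      BPath.eqv z w :=
  periodicity_factorisation_general k Λ hΛ v m n hmn hlp x hx
end
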